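/- For every integer d ≥ 2, setting m = d^{d+3} and q = d^{d-2}, the book graph B_{d,m} satisfies HG(B_{d,m}) ≥ q; that is, the players have a winning guessing strategy on B_{d,m} with d^{d-2} colors. -/

import Mathlib

/-- A winning hat-guessing strategy with `q` colors on the graph `G`: each vertex `v` has a
guessing function that depends only on the hat colors of its neighbors, and for every hat
assignment some vertex guesses its own hat color correctly. -/
def SimpleGraph.HatWinning {V : Type*} (G : SimpleGraph V) (q : ℕ) : Prop :=
  ∃ g : V → (V → Fin q) → Fin q,
    (∀ (v : V) (h h' : V → Fin q), (∀ u, G.Adj v u → h u = h' u) → g v h = g v h') ∧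
    ∀ h : V → Fin q, ∃ v, g v h = h v

/-- The hat guessing number of `G`: the largest number of colors admitting a winning strategy. -/
noncomputable def SimpleGraph.hatGuessingNumber {V : Type*} (G : SimpleGraph V) : ℕ :=
  sSup {q | G.HatWinning q}

/-- The book graph `B_{d,m}`: a central clique on `d` vertices together with an independent
set of `m` outer vertices, each joined to all vertices of the central clique. -/
def bookGraph (d m : ℕ) : SimpleGraph (Fin d ⊕ Fin m) where
  Adj a b :=
    match a, b with
    | .inl x, .inl y => x ≠ y
    | .inl _, .inr _ => True
    | .inr _, .inl _ => True
    | .inr _, .inr _ => False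
  symm := by constructor; rintro (x | i) (y | j) h <;> simp_all <;> tauto
  loopless := by constructor; rintro (x | i) h <;> simp_all

/-!
Outer vertex `u` guesses `F u` applied to the coloring of the clique. Once the outer hats `y` are
fixed, the clique colorings on which every outer vertex is wrong form a set `R y`, and if every
`d ^ d`-set of clique colorings is mapped onto all colors by some `F u`, then `#(R y) < d ^ d`;
a union bound over random families `F` shows such a family exists for `m = d ^ (d + 3)`.

The clique can defend any set `R` of at most `d ^ d` colorings: by the Loomis–Whitney inequality
and AM–GM, a subset `S ⊆ R` has at least `#S` distinct pairs (vertex `i`, view of `c ∈ S`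
from `i`), so Hall's theorem matches the colorings in `R` injectively to such pairs, and
vertex `i` seeing a view guesses the color at `i` of the coloring matched to it.
-/

open Finset Function

namespace SimpleGraph

variable {V : Type*}

theorem hatWinning_one [Nonempty V] (G : SimpleGraph V) : G.HatWinning 1 :=
  ⟨fun _ _ => 0, fun _ _ _ _ => rfl, fun _ => ⟨Classical.arbitrary V, Subsingleton.elim _ _⟩⟩

variable {G : SimpleGraph V} {q : ℕ}

/-- A vertex's guess ignores its own hat, so it is right on at most `q ^ (n - 1)` of the
`q ^ n` colorings. -/
theorem HatWinning.le_card [Fintype V] (hw : G.HatWinning q) : q ≤ Fintype.card V := by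
  classical
  obtain ⟨g, hloc, hwin⟩ := hw
  cases isEmpty_or_nonempty V
  · exact (hwin isEmptyElim).elim fun v _ => isEmptyElim v
  set n := Fintype.card V
  have hright : ∀ v, #{h : V → Fin q | g v h = h v} ≤ q ^ (n - 1) := by
    intro v
    calc #{h : V → Fin q | g v h = h v}
        ≤ Fintype.card ({u // u ≠ v} → Fin q) := by
          refine card_le_card_of_injOn (fun h u => h u) (fun _ _ => mem_univ _) ?_
          intro h₁ hh₁ h₂ hh₂ heq
          have hoff : ∀ u ≠ v, h₁ u = h₂ u := fun u hu => congrFun heq ⟨u, hu⟩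
          funext u
          by_cases hu : u = v
          · subst hu
            simp only [coe_filter, mem_univ, true_and, Set.mem_ofPred_eq] at hh₁ hh₂
            rw [← hh₁, ← hh₂]
            exact hloc u h₁ h₂ fun w hw => hoff w (G.ne_of_adj hw).symm
          · exact hoff u hu
      _ = q ^ (n - 1) := by simp [Fintype.card_subtype_compl, n]
  have hcount : q ^ n ≤ n * q ^ (n - 1) :=
    calc q ^ n = #(univ : Finset (V → Fin q)) := by simp [n]
      _ ≤ #(univ.biUnion fun v => {h : V → Fin q | g v h = h v}) :=
          card_le_card fun h _ => by simpa using hwin h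
      _ ≤ ∑ v, #{h : V → Fin q | g v h = h v} := card_biUnion_le
      _ ≤ n * q ^ (n - 1) := (sum_le_sum fun v _ => hright v).trans_eq (by simp [n])
  rcases Nat.eq_zero_or_pos q with rfl | hq
  · exact Nat.zero_le _
  have hn : n ≠ 0 := Fintype.card_ne_zero
  rw [← pow_sub_one_mul hn, mul_comm] at hcount
  exact Nat.le_of_mul_le_mul_right hcount (pow_pos hq _)

theorem HatWinning.le_hatGuessingNumber [Fintype V] (hw : G.HatWinning q) :
    q ≤ G.hatGuessingNumber :=
  le_csSup ⟨Fintype.card V, fun _ h => h.le_card⟩ hw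

end SimpleGraph

theorem ENNReal.sum_prod_rpow_le_prod_sum_rpow {ι α : Type*} [Fintype α] (s : Finset ι)
    (f : ι → α → ENNReal) {p : ι → ℝ} (hp : ∑ i ∈ s, p i = 1) (hp₀ : ∀ i ∈ s, 0 ≤ p i) :
    ∑ a, ∏ i ∈ s, f i a ^ p i ≤ ∏ i ∈ s, (∑ a, f i a) ^ p i := by
  let _ : MeasurableSpace α := ⊤
  have : MeasurableSingletonClass α := ⟨fun _ => trivial⟩
  simpa [MeasureTheory.lintegral_fintype] using
    ENNReal.lintegral_prod_norm_pow_le (μ := MeasureTheory.Measure.count) s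
      (fun i _ => (measurable_from_top (f := f i)).aemeasurable) hp hp₀

/-- Hölder's inequality with `#J` equal exponents. -/
theorem Nat.sum_pow_card_le_mul_prod_sum {ι α : Type*} [Fintype α] {J : Finset ι}
    (hJ : J.Nonempty) (C : ℕ) (t : α → ℕ) (x : ι → α → ℕ)
    (h : ∀ a, t a ^ #J ≤ C * ∏ i ∈ J, x i a) :
    (∑ a, t a) ^ #J ≤ C * ∏ i ∈ J, ∑ a, x i a := by
  have hn : (0 : ℝ) < #J := by exact_mod_cast hJ.card_pos
  have hr : (0 : ℝ) ≤ (#J : ℝ)⁻¹ := inv_nonneg.mpr hn.le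
  suffices h' : (∑ a, t a : ENNReal) ≤
      ((C : ENNReal) * ∏ i ∈ J, ∑ a, (x i a : ENNReal)) ^ (#J : ℝ)⁻¹ by
    rw [ENNReal.le_rpow_inv_iff hn, ENNReal.rpow_natCast] at h'
    exact_mod_cast h'
  have hpoint : ∀ a, (t a : ENNReal) ≤
      (C : ENNReal) ^ (#J : ℝ)⁻¹ * ∏ i ∈ J, (x i a : ENNReal) ^ (#J : ℝ)⁻¹ := by
    intro a
    rw [ENNReal.prod_rpow_of_nonneg hr, ← ENNReal.mul_rpow_of_nonneg _ _ hr,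
      ENNReal.le_rpow_inv_iff hn, ENNReal.rpow_natCast]
    exact_mod_cast h a
  calc (∑ a, t a : ENNReal)
      ≤ ∑ a, (C : ENNReal) ^ (#J : ℝ)⁻¹ * ∏ i ∈ J, (x i a : ENNReal) ^ (#J : ℝ)⁻¹ :=
        sum_le_sum fun a _ => hpoint a
    _ ≤ (C : ENNReal) ^ (#J : ℝ)⁻¹ * ∏ i ∈ J, (∑ a, (x i a : ENNReal)) ^ (#J : ℝ)⁻¹ := by
        rw [← mul_sum]
        gcongr
        exact ENNReal.sum_prod_rpow_le_prod_sum_rpow J _ (by simp [hn.ne']) fun _ _ => hr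
    _ = _ := by rw [ENNReal.prod_rpow_of_nonneg hr, ← ENNReal.mul_rpow_of_nonneg _ _ hr]

theorem Nat.card_pow_card_mul_prod_le_sum_pow {ι : Type*} (J : Finset ι) (f : ι → ℕ) :
    #J ^ #J * ∏ i ∈ J, f i ≤ (∑ i ∈ J, f i) ^ #J := by
  rcases J.eq_empty_or_nonempty with rfl | hJ
  · simp
  have hn : (#J : NNReal) ≠ 0 := by exact_mod_cast hJ.card_pos.ne'
  have amgm := NNReal.geom_mean_le_arith_mean_weighted J (fun _ => (#J : NNReal)⁻¹)
    (fun i => (f i : NNReal)) (by simp [hn])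
  rw [← mul_sum, NNReal.finsetProd_rpow, NNReal.coe_inv, NNReal.coe_natCast,
    NNReal.rpow_inv_le_iff (by exact_mod_cast hJ.card_pos), NNReal.rpow_natCast, mul_pow] at amgm
  suffices h : (#J ^ #J * ∏ i ∈ J, f i : NNReal) ≤ (∑ i ∈ J, f i : NNReal) ^ #J by
    exact_mod_cast h
  calc (#J ^ #J * ∏ i ∈ J, f i : NNReal)
      ≤ #J ^ #J * ((#J : NNReal)⁻¹ ^ #J * (∑ i ∈ J, f i : NNReal) ^ #J) := by
        gcongr
        exact_mod_cast amgm
    _ = _ := by rw [← mul_assoc, ← mul_pow, mul_inv_cancel₀ hn, one_pow, one_mul]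

theorem Function.eq_of_update_eq_of_apply_eq {ι α : Type*} [DecidableEq ι] {c c' : ι → α}
    {i : ι} {z : α} (h : update c i z = update c' i z) (hi : c i = c' i) : c = c' := by
  rw [← update_eq_self i c, ← update_eq_self i c', ← update_idem z (c i) c,
    ← update_idem z (c' i) c', h, hi]

section LoomisWhitney

variable {ι α : Type*} [DecidableEq ι] [DecidableEq α] [DecidableEq (ι → α)] (z : α)

/-- Discrete Loomis–Whitney inequality, with the projection forgetting coordinate `i` realised as
overwriting it by the constant `z`. -/
theorem Finset.card_pow_le_prod_card_image_update [Fintype α] (J : Finset ι)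
    {S : Finset (ι → α)} (hS : S.Nonempty) :
    #S ^ (#J - 1) ≤ ∏ i ∈ J, #(S.image (update · i z)) := by
  induction J using Finset.induction_on generalizing S with
  | empty => simp
  | insert i₀ J hi₀ ih =>
    rcases J.eq_empty_or_nonempty with rfl | hJ
    · simpa using (hS.image (update · i₀ z)).card_pos
    set fiber : α → Finset (ι → α) := fun a => {c ∈ S | c i₀ = a}
    have hfiber_le : ∀ a, #(fiber a) ≤ #(S.image (update · i₀ z)) := fun a =>
      card_le_card_of_injOn _ (fun c hc => mem_image_of_mem _ (filter_subset _ _ hc))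
        fun c hc c' hc' h => eq_of_update_eq_of_apply_eq h
          (((mem_filter.1 hc).2).trans ((mem_filter.1 hc').2).symm)
    have hsum_fiber : ∑ a, #(fiber a) = #S :=
      (card_eq_sum_card_fiberwise fun c _ => mem_univ (c i₀)).symm
    have hsum_image : ∀ i ∈ J, ∑ a, #((fiber a).image (update · i z)) ≤
        #(S.image (update · i z)) := by
      intro i hi
      have hi₀i : i₀ ≠ i := fun h => hi₀ (h ▸ hi)
      rw [← card_biUnion]
      · exact card_le_card (biUnion_subset.2 fun a _ => image_subset_image (filter_subset _ _))
      · -- overwriting coordinate `i` keeps coordinate `i₀`, which tells the fibers apart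
        intro a _ b _ hab
        simp only [Function.onFun, disjoint_left, mem_image, mem_filter, fiber]
        rintro _ ⟨c, ⟨-, rfl⟩, rfl⟩ ⟨c', ⟨-, rfl⟩, h⟩
        exact hab (by simpa [update_of_ne hi₀i] using (congrFun h i₀).symm)
    have hfiber : ∀ a, #(fiber a) ^ #J ≤
        #(S.image (update · i₀ z)) * ∏ i ∈ J, #((fiber a).image (update · i z)) := by
      intro a
      rcases (fiber a).eq_empty_or_nonempty with h | h
      · simp [h, hJ.card_pos.ne']
      · rw [← pow_sub_one_mul hJ.card_pos.ne', mul_comm]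
        exact Nat.mul_le_mul (hfiber_le a) (ih h)
    calc #S ^ (#(insert i₀ J) - 1) = (∑ a, #(fiber a)) ^ #J := by
          rw [card_insert_of_notMem hi₀, hsum_fiber, Nat.add_sub_cancel]
      _ ≤ #(S.image (update · i₀ z)) * ∏ i ∈ J, ∑ a, #((fiber a).image (update · i z)) :=
          Nat.sum_pow_card_le_mul_prod_sum hJ _ _ _ hfiber
      _ ≤ ∏ i ∈ insert i₀ J, #(S.image (update · i z)) := by
          rw [prod_insert hi₀]
          exact Nat.mul_le_mul_left _ (prod_le_prod' hsum_image)

theorem Finset.card_le_sum_card_image_update [Fintype ι] [Nonempty ι] [Fintype α]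
    (S : Finset (ι → α)) (hS : #S ≤ Fintype.card ι ^ Fintype.card ι) :
    #S ≤ ∑ i, #(S.image (update · i z)) := by
  rcases S.eq_empty_or_nonempty with rfl | hne
  · simp
  by_contra! hlt
  have hn : Fintype.card ι ≠ 0 := Fintype.card_ne_zero
  have key : Fintype.card ι ^ Fintype.card ι * #S ^ (Fintype.card ι - 1) <
      #S ^ (Fintype.card ι - 1) * #S :=
    calc Fintype.card ι ^ Fintype.card ι * #S ^ (Fintype.card ι - 1)
        ≤ Fintype.card ι ^ Fintype.card ι * ∏ i, #(S.image (update · i z)) := by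
          gcongr
          simpa using card_pow_le_prod_card_image_update z univ hne
      _ ≤ (∑ i, #(S.image (update · i z))) ^ Fintype.card ι := by
          simpa using Nat.card_pow_card_mul_prod_le_sum_pow univ fun i => #(S.image (update · i z))
      _ < #S ^ Fintype.card ι := Nat.pow_lt_pow_left hlt hn
      _ = #S ^ (Fintype.card ι - 1) * #S := (pow_sub_one_mul hn _).symm
  exact hS.not_gt (Nat.lt_of_mul_lt_mul_right (mul_comm (#S ^ _) #S ▸ key))

end LoomisWhitney

section CliqueGuess

variable {ι α : Type*} [Fintype ι] [DecidableEq ι] [DecidableEq (ι → α)] (z : α)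

/-- Hall's theorem matches every coloring `c ∈ R` to a vertex `i` and the view `update c i z`
of `c` from `i`, injectively; vertex `i` then guesses the matched coloring's color at `i`. -/
theorem exists_guess_update_of_forall_card_le (R : Finset (ι → α))
    (hR : ∀ S ⊆ R, #S ≤ ∑ i, #(S.image (update · i z))) :
    ∃ g : ι → (ι → α) → α, ∀ c ∈ R, ∃ i, g i (update c i z) = c i := by
  set view : R → Finset (ι × (ι → α)) := fun c => univ.image fun i => (i, update c.1 i z)
  have hall : ∀ s : Finset R, #s ≤ #(s.biUnion view) := by
    intro s
    set S := s.map (Embedding.subtype _)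
    calc #s = #S := (card_map _).symm
      _ ≤ ∑ i, #(S.image (update · i z)) := hR S fun c hc => by
          obtain ⟨c, -, rfl⟩ := mem_map.1 hc
          exact c.2
      _ ≤ ∑ i, #{p ∈ s.biUnion view | p.1 = i} := by
          refine sum_le_sum fun i _ => card_le_card_of_injOn (fun w => (i, w)) ?_ ?_
          · intro w hw
            obtain ⟨_, hcS, rfl⟩ := mem_image.1 hw
            obtain ⟨c, hcs, rfl⟩ := mem_map.1 hcS
            simpa [view] using ⟨c.1, ⟨c.2, hcs⟩, rfl⟩
          · intro w _ w' _ h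
            exact (Prod.mk.inj h).2
      _ = #(s.biUnion view) := (card_eq_sum_card_fiberwise fun p _ => mem_univ p.1).symm
  obtain ⟨f, hf_inj, hf_mem⟩ := (all_card_le_biUnion_card_iff_exists_injective view).1 hall
  refine ⟨fun i w => (partialInv f (i, w)).elim z fun c => c.1 i, fun c hc => ?_⟩
  obtain ⟨i, -, hi⟩ := mem_image.1 (hf_mem ⟨c, hc⟩)
  exact ⟨i, by simp [hi, partialInv_left hf_inj]⟩

theorem exists_guess_update_of_card_le [Nonempty ι] [Fintype α] [DecidableEq α]
    {R : Finset (ι → α)} (hR : #R ≤ Fintype.card ι ^ Fintype.card ι) :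
    ∃ g : ι → (ι → α) → α, ∀ c ∈ R, ∃ i, g i (update c i z) = c i :=
  exists_guess_update_of_forall_card_le z R fun S hS =>
    card_le_sum_card_image_update z S ((card_le_card hS).trans hR)

end CliqueGuess

section RandomFamily

variable {U X Y : Type*} [Fintype U] [Fintype X] [Fintype Y]

theorem card_filter_forall_mem_ne [DecidableEq X] [DecidableEq Y] (S : Finset X) (v : Y) :
    #{f : X → Y | ∀ x ∈ S, f x ≠ v} =
      (Fintype.card Y - 1) ^ #S * Fintype.card Y ^ (Fintype.card X - #S) := by
  have : ({f : X → Y | ∀ x ∈ S, f x ≠ v} : Finset (X → Y)) =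
      Fintype.piFinset fun x => if x ∈ S then univ.erase v else univ := by
    ext f
    simp only [mem_filter, mem_univ, true_and, Fintype.mem_piFinset]
    refine ⟨fun h x => ?_, fun h x hx => by simpa [hx] using h x⟩
    split_ifs with hx <;> simp [h x, hx]
  have hcompl : #{x | x ∉ S} = Fintype.card X - #S := by
    rw [← card_compl]
    congr 1
    ext
    simp
  rw [this, Fintype.card_piFinset]
  simp [apply_ite, prod_ite, hcompl]

theorem exists_forall_surjOn_of_card_lt (D : ℕ)
    (h : (Fintype.card X).choose D * (Fintype.card Y *
      ((Fintype.card Y - 1) ^ D * Fintype.card Y ^ (Fintype.card X - D))) ^ Fintype.card U <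
      Fintype.card Y ^ (Fintype.card X * Fintype.card U)) :
    ∃ F : U → X → Y, ∀ S : Finset X, #S = D → ∃ u, Set.SurjOn (F u) S Set.univ := by
  classical
  by_contra! hbad
  set missing : Finset X → Finset (X → Y) := fun S => {f | ∃ v, ∀ x ∈ S, f x ≠ v}
  have hmissing : ∀ S : Finset X, #S = D → #(missing S) ≤
      Fintype.card Y * ((Fintype.card Y - 1) ^ D * Fintype.card Y ^ (Fintype.card X - D)) := by
    intro S hS
    calc #(missing S) ≤ #(univ.biUnion fun v : Y => {f : X → Y | ∀ x ∈ S, f x ≠ v}) :=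
          card_le_card fun f hf => by simpa [missing] using hf
      _ ≤ ∑ v : Y, #{f : X → Y | ∀ x ∈ S, f x ≠ v} := card_biUnion_le
      _ = _ := by simp [card_filter_forall_mem_ne, hS]
  have hcover : (univ : Finset (U → X → Y)) ⊆
      (univ.powersetCard D).biUnion fun S => Fintype.piFinset fun _ => missing S := by
    intro F _
    obtain ⟨S, hS, hF⟩ := hbad F
    simp only [mem_biUnion, mem_powersetCard_univ, Fintype.mem_piFinset]
    refine ⟨S, hS, fun u => ?_⟩
    simpa [missing, Set.SurjOn, Set.subset_def] using hF u
  refine h.not_ge ?_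
  calc Fintype.card Y ^ (Fintype.card X * Fintype.card U) = #(univ : Finset (U → X → Y)) := by
        simp [← pow_mul, mul_comm]
    _ ≤ ∑ S ∈ univ.powersetCard D, #(Fintype.piFinset fun _ : U => missing S) :=
        (card_le_card hcover).trans card_biUnion_le
    _ ≤ _ := by
        rw [← card_univ (α := X), ← card_powersetCard, ← smul_eq_mul, ← sum_const]
        refine sum_le_sum fun S hS => ?_
        rw [Fintype.card_piFinset, prod_const, card_univ]
        exact Nat.pow_le_pow_left (hmissing S (mem_powersetCard_univ.1 hS)) _

end RandomFamily

theorem Nat.two_mul_sub_one_pow_le_pow {q : ℕ} (hq : q ≠ 0) : 2 * (q - 1) ^ q ≤ q ^ q := by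
  have bernoulli := pow_add_mul_le_add_pow (a := q - 1) (b := 1) (Nat.zero_le _) (by omega) q
  rw [Nat.sub_add_cancel (Nat.one_le_iff_ne_zero.2 hq), mul_one, Nat.cast_id] at bernoulli
  have : (q - 1) ^ q ≤ q * (q - 1) ^ (q - 1) := by
    rw [← pow_sub_one_mul hq, mul_comm]
    exact Nat.mul_le_mul_right _ (Nat.sub_le q 1)
  omega

/-- Union bound for `q = d ^ (d - 2)` and `m = d ^ (d + 3)`: as `(1 - 1 / q) ^ q ≤ 1 / 2` and
`d ^ d * m = q * d ^ (d + 5)`, a fixed set of `d ^ d` colorings and fixed colors miss each other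
under all `m` functions with probability at most `2 ^ (-d ^ (d + 5))`, while there are at most
`binom (q ^ d) (d ^ d) * q ^ m ≤ q ^ (d ^ (d + 1) + m) < 2 ^ d ^ (d + 5)` such choices. -/
theorem choose_mul_pow_lt_book (d : ℕ) (hd : 3 ≤ d) :
    ((d ^ (d - 2)) ^ d).choose (d ^ d) * (d ^ (d - 2) * ((d ^ (d - 2) - 1) ^ d ^ d *
      (d ^ (d - 2)) ^ ((d ^ (d - 2)) ^ d - d ^ d))) ^ d ^ (d + 3) <
      (d ^ (d - 2)) ^ ((d ^ (d - 2)) ^ d * d ^ (d + 3)) := by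
  set q := d ^ (d - 2)
  set P := d ^ d
  have hq : 2 ≤ q := by
    have : d ≤ q := Nat.le_self_pow (by omega) d
    omega
  have hDN : P ≤ q ^ d := by
    rw [← pow_mul]
    exact Nat.pow_le_pow_right (by omega) (Nat.le_mul_of_pos_left d (by omega))
  have hm : d ^ (d + 3) = d ^ 3 * P := by rw [pow_add, mul_comm]
  have hDm : P * d ^ (d + 3) = q * (d ^ 5 * P) := by
    have hqP : q * d ^ 2 = P := by
      rw [← pow_add, Nat.sub_add_cancel (by omega : 2 ≤ d)]
    rw [hm, ← hqP]
    ring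
  have hexp : d * ((d - 2) * (d * P + d ^ 3 * P)) < d ^ 5 * P := by
    have hpoly : d * (d - 2) * (d + d ^ 3) < d ^ 5 := by
      zify [(by omega : 2 ≤ d)]
      nlinarith [pow_pos (by omega : (0 : ℤ) < d) 2, pow_pos (by omega : (0 : ℤ) < d) 4]
    calc d * ((d - 2) * (d * P + d ^ 3 * P)) = d * (d - 2) * (d + d ^ 3) * P := by ring
      _ < d ^ 5 * P := Nat.mul_lt_mul_of_pos_right hpoly (by positivity)
  have hsmall : q ^ (d * P + d ^ (d + 3)) < 2 ^ (d ^ 5 * P) :=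
    calc q ^ (d * P + d ^ (d + 3)) = d ^ ((d - 2) * (d * P + d ^ 3 * P)) := by rw [← pow_mul, hm]
      _ ≤ (2 ^ d) ^ ((d - 2) * (d * P + d ^ 3 * P)) := Nat.pow_le_pow_left Nat.lt_two_pow_self.le _
      _ < 2 ^ (d ^ 5 * P) := by
        rw [← pow_mul]
        exact Nat.pow_lt_pow_right (by norm_num) hexp
  have hbig : 2 ^ (d ^ 5 * P) * (q - 1) ^ (P * d ^ (d + 3)) ≤ q ^ (P * d ^ (d + 3)) := by
    rw [hDm, pow_mul (q - 1) q, pow_mul q q, ← mul_pow]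
    exact Nat.pow_le_pow_left (Nat.two_mul_sub_one_pow_le_pow (by omega)) _
  calc (q ^ d).choose P * (q * ((q - 1) ^ P * q ^ (q ^ d - P))) ^ d ^ (d + 3)
      ≤ (q ^ d) ^ P * (q * ((q - 1) ^ P * q ^ (q ^ d - P))) ^ d ^ (d + 3) :=
        Nat.mul_le_mul_right _ (Nat.choose_le_pow _ _)
    _ = q ^ (d * P + d ^ (d + 3)) * (q - 1) ^ (P * d ^ (d + 3)) *
          q ^ ((q ^ d - P) * d ^ (d + 3)) := by ring
    _ < 2 ^ (d ^ 5 * P) * (q - 1) ^ (P * d ^ (d + 3)) * q ^ ((q ^ d - P) * d ^ (d + 3)) := by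
        gcongr
        exact pow_pos (by omega) _
    _ ≤ q ^ (P * d ^ (d + 3)) * q ^ ((q ^ d - P) * d ^ (d + 3)) := by gcongr
    _ = q ^ (q ^ d * d ^ (d + 3)) := by rw [← pow_add, ← add_mul, Nat.add_sub_cancel' hDN]

theorem exists_book_family (d : ℕ) (hd : 3 ≤ d) :
    ∃ F : Fin (d ^ (d + 3)) → (Fin d → Fin (d ^ (d - 2))) → Fin (d ^ (d - 2)),
      ∀ S : Finset (Fin d → Fin (d ^ (d - 2))), #S = d ^ d →
        ∃ u, Set.SurjOn (F u) S Set.univ :=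
  exists_forall_surjOn_of_card_lt _ (by simpa using choose_mul_pow_lt_book d hd)

theorem card_filter_forall_ne_lt {U X Y : Type*} [Fintype X] {F : U → X → Y} {D : ℕ}
    (hF : ∀ S : Finset X, #S = D → ∃ u, Set.SurjOn (F u) S Set.univ) (y : U → Y)
    [DecidablePred fun c => ∀ u, F u c ≠ y u] :
    #{c : X | ∀ u, F u c ≠ y u} < D := by
  by_contra! hle
  obtain ⟨S, hSR, hS⟩ := exists_subset_card_eq hle
  obtain ⟨u, hu⟩ := hF S hS
  obtain ⟨c, hc, hcy⟩ := hu (Set.mem_univ (y u))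
  exact (mem_filter.1 (hSR hc)).2 u hcy

theorem bookGraph_hatWinning_of_forall_exists_guess {d m q : ℕ} (z : Fin q)
    (F : Fin m → (Fin d → Fin q) → Fin q)
    (hg : ∀ y : Fin m → Fin q, ∃ g : Fin d → (Fin d → Fin q) → Fin q,
      ∀ c, (∀ u, F u c ≠ y u) → ∃ i, g i (update c i z) = c i) :
    (bookGraph d m).HatWinning q := by
  choose g hg using hg
  refine ⟨fun v h => match v with
    | .inl i => g (fun u => h (.inr u)) i (update (fun j => h (.inl j)) i z)
    | .inr u => F u fun j => h (.inl j), ?_, fun h => ?_⟩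
  · rintro (i | u) h h' hagree
    · have houter : (fun u => h (.inr u)) = fun u => h' (.inr u) :=
        funext fun u => hagree (.inr u) trivial
      have hview : update (fun j => h (.inl j)) i z = update (fun j => h' (.inl j)) i z := by
        funext j
        by_cases hj : j = i
        · simp [hj]
        · simpa [hj] using hagree (.inl j) (Ne.symm hj)
      simp only [houter, hview]
    · simp only [funext fun j => hagree (.inl j) trivial]
  by_cases houter : ∃ u, F u (fun j => h (.inl j)) = h (.inr u)
  · obtain ⟨u, hu⟩ := houter
    exact ⟨.inr u, hu⟩
  · push Not at houter
    obtain ⟨i, hi⟩ := hg (fun u => h (.inr u)) _ houter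
    exact ⟨.inl i, hi⟩

/-- For every integer `d ≥ 2`, with `m = d ^ (d + 3)` and `q = d ^ (d - 2)`,
the book graph `B_{d,m}` admits a winning guessing strategy with `q` colors, i.e.
`HG(B_{d,m}) ≥ d ^ (d - 2)`. -/
theorem bookGraph_hatWinning (d : ℕ) (hd : 2 ≤ d) :
    (bookGraph d (d ^ (d + 3))).HatWinning (d ^ (d - 2)) ∧
      d ^ (d - 2) ≤ (bookGraph d (d ^ (d + 3))).hatGuessingNumber := by
  have hwin : (bookGraph d (d ^ (d + 3))).HatWinning (d ^ (d - 2)) := by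
    rcases hd.eq_or_lt with rfl | hd
    · have : Nonempty (Fin 2 ⊕ Fin (2 ^ (2 + 3))) := ⟨.inl 0⟩
      exact SimpleGraph.hatWinning_one _
    have : Nonempty (Fin d) := ⟨⟨0, by omega⟩⟩
    let z : Fin (d ^ (d - 2)) := ⟨0, by positivity⟩
    obtain ⟨F, hF⟩ := exists_book_family d hd
    refine bookGraph_hatWinning_of_forall_exists_guess z F fun y => ?_
    obtain ⟨g, hg⟩ := exists_guess_update_of_card_le z (R := {c | ∀ u, F u c ≠ y u})
      (by simpa using (card_filter_forall_ne_lt hF y).le)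
    exact ⟨g, fun c hc => hg c (by simpa using hc)⟩
  exact ⟨hwin, hwin.le_hatGuessingNumber⟩
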